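/- Let ℓ be a nonnegative integer, set m = 4ℓ + 4, and let D be a 2m×2m integer matrix all of whose entries are 0 or 1, with zero diagonal, satisfying D·J = J·D = (m−1)·J, D·Dᵀ = Dᵀ·D, D·D = (2ℓ+1)·(D + Dᵀ) + (4ℓ+3)·(J − I − D − Dᵀ), and D·Dᵀ = (4ℓ+3)·I + (2ℓ+1)·(D + Dᵀ) (these conditions hold for the adjacency matrix of the doubly regular (m,2)-team tournament obtained from a doubly regular tournament of order m−1 = 4ℓ+3). Then M(D) is the adjacency matrix of a directed strongly regular graph with parameters (4m, 2m−1, m, m−1, m−1); that is, M(D)·M(D) = m·I + (m−1)·M(D) + (m−1)·(J − I − M(D)) and M(D)·J = J·M(D) = (2m−1)·J. -/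

import Mathlib

open Matrix Kronecker

/-- The all-ones square matrix over `ℤ` indexed by `α`. -/
def allOnes (α : Type*) : Matrix α α ℤ := Matrix.of fun _ _ => 1

/-- `B` is the adjacency matrix of a directed strongly regular graph
with parameters `(n, k, t, l, m)`. -/
def IsAdjDSRG {α : Type*} [Fintype α] [DecidableEq α]
    (B : Matrix α α ℤ) (n k t l m : ℤ) : Prop :=
  (Fintype.card α : ℤ) = n ∧
  (∀ i j, B i j = 0 ∨ B i j = 1) ∧
  (∀ i, B i i = 0) ∧
  B * B = t • (1 : Matrix α α ℤ) + l • B + m • (allOnes α - 1 - B) ∧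
  B * allOnes α = k • allOnes α ∧
  allOnes α * B = k • allOnes α

/-- `A` is the adjacency matrix of a regular tournament of order `n` with valency `k`. -/
def IsRegularTournament {n : ℕ} (k : ℕ) (A : Matrix (Fin n) (Fin n) ℤ) : Prop :=
  (∀ i j, A i j = 0 ∨ A i j = 1) ∧
  (∀ i, A i i = 0) ∧
  A + Aᵀ = allOnes (Fin n) - 1 ∧
  A * allOnes (Fin n) = (k : ℤ) • allOnes (Fin n) ∧
  allOnes (Fin n) * A = (k : ℤ) • allOnes (Fin n)

/-- The block matrix `M(X) = [[X, Xᵀ + I], [X + I, Xᵀ]]`. -/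
def MBlock {α : Type*} [DecidableEq α] (X : Matrix α α ℤ) :
    Matrix (α ⊕ α) (α ⊕ α) ℤ :=
  Matrix.fromBlocks X (Xᵀ + 1) (X + 1) Xᵀ

/-!
Squaring the block matrix gives `M(X)² = I + [[A, Bᵀ], [A, Bᵀ]]` with
`A = X² + XᵀX + X + Xᵀ` and `B = X² + XXᵀ + X + Xᵀ`. For normal `X` these coincide, and the
relations of the team tournament say exactly that `B = (m - 1) J`. Hence `M(X)² = I + (m - 1) J`,
which is the DSRG equation with `t = m` and `λ = μ = m - 1`.
-/

lemma allOnes_transpose (α : Type*) : (allOnes α)ᵀ = allOnes α := rfl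

lemma allOnes_sum_eq_fromBlocks (α : Type*) :
    allOnes (α ⊕ α) = fromBlocks (allOnes α) (allOnes α) (allOnes α) (allOnes α) := by
  ext (i | i) (j | j) <;> rfl

lemma MBlock_apply_eq_zero_or_one {α : Type*} [DecidableEq α] {X : Matrix α α ℤ}
    (h01 : ∀ i j, X i j = 0 ∨ X i j = 1)
    (hdiag : ∀ i, X i i = 0) (i j : α ⊕ α) : MBlock X i j = 0 ∨ MBlock X i j = 1 := by
  rcases i with i | i <;> rcases j with j | j
  · exact h01 i j
  · obtain rfl | hij := eq_or_ne i j
    · simp [MBlock, hdiag]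
    · simpa [MBlock, one_apply_ne hij] using h01 j i
  · obtain rfl | hij := eq_or_ne i j
    · simp [MBlock, hdiag]
    · simpa [MBlock, one_apply_ne hij] using h01 i j
  · exact h01 j i

lemma MBlock_apply_self {α : Type*} [DecidableEq α] {X : Matrix α α ℤ}
    (hdiag : ∀ i, X i i = 0) (i : α ⊕ α) : MBlock X i i = 0 := by
  rcases i with i | i <;> simp [MBlock, hdiag]

section MBlock

variable {α : Type*} [Fintype α] {X : Matrix α α ℤ}

lemma transpose_mul_allOnes {k : ℤ} (hJX : allOnes α * X = k • allOnes α) :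
    Xᵀ * allOnes α = k • allOnes α := by
  rw [← allOnes_transpose, ← transpose_mul, hJX, transpose_smul]

lemma allOnes_mul_transpose {k : ℤ} (hXJ : X * allOnes α = k • allOnes α) :
    allOnes α * Xᵀ = k • allOnes α := by
  rw [← allOnes_transpose, ← transpose_mul, hXJ, transpose_smul]

variable [DecidableEq α]

lemma MBlock_mul_allOnes {k : ℤ} (hXJ : X * allOnes α = k • allOnes α)
    (hJX : allOnes α * X = k • allOnes α) :
    MBlock X * allOnes (α ⊕ α) = (2 * k + 1) • allOnes (α ⊕ α) := by
  have hXTJ := transpose_mul_allOnes hJX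
  rw [allOnes_sum_eq_fromBlocks, MBlock, fromBlocks_multiply, fromBlocks_smul]
  congr 1 <;> simp only [add_mul, one_mul, hXJ, hXTJ] <;> module

lemma allOnes_mul_MBlock {k : ℤ} (hXJ : X * allOnes α = k • allOnes α)
    (hJX : allOnes α * X = k • allOnes α) :
    allOnes (α ⊕ α) * MBlock X = (2 * k + 1) • allOnes (α ⊕ α) := by
  have hJXT := allOnes_mul_transpose hXJ
  rw [allOnes_sum_eq_fromBlocks, MBlock, fromBlocks_multiply, fromBlocks_smul]
  congr 1 <;> simp only [mul_add, mul_one, hJX, hJXT] <;> module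

lemma MBlock_mul_self {c : ℤ} (hnormal : X * Xᵀ = Xᵀ * X)
    (hsq : X * X + X * Xᵀ + X + Xᵀ = c • allOnes α) :
    MBlock X * MBlock X = 1 + c • allOnes (α ⊕ α) := by
  have hsqT : Xᵀ * Xᵀ + X * Xᵀ + X + Xᵀ = c • allOnes α := by
    have h := congrArg transpose hsq
    simp only [transpose_add, transpose_mul, transpose_transpose, transpose_smul,
      allOnes_transpose] at h
    rw [← h]
    abel
  rw [allOnes_sum_eq_fromBlocks, MBlock, fromBlocks_multiply, ← fromBlocks_one,
    fromBlocks_smul, fromBlocks_add]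
  congr 1
  · rw [← hsq]; simp only [add_mul, mul_add, mul_one, one_mul, ← hnormal]; abel
  · rw [← hsqT]; simp only [add_mul, mul_add, mul_one, one_mul]; abel
  · rw [← hsq]; simp only [add_mul, mul_add, mul_one, one_mul, ← hnormal]; abel
  · rw [← hsqT]; simp only [add_mul, mul_add, mul_one, one_mul]; abel

theorem isAdjDSRG_MBlock {k : ℤ} (h01 : ∀ i j, X i j = 0 ∨ X i j = 1)
    (hdiag : ∀ i, X i i = 0) (hXJ : X * allOnes α = k • allOnes α)
    (hJX : allOnes α * X = k • allOnes α) (hnormal : X * Xᵀ = Xᵀ * X)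
    (hsq : X * X + X * Xᵀ + X + Xᵀ = k • allOnes α) :
    IsAdjDSRG (MBlock X) (2 * Fintype.card α) (2 * k + 1) (k + 1) k k := by
  refine ⟨by simp [two_mul], MBlock_apply_eq_zero_or_one h01 hdiag, MBlock_apply_self hdiag,
    ?_, MBlock_mul_allOnes hXJ hJX, allOnes_mul_MBlock hXJ hJX⟩
  rw [MBlock_mul_self hnormal hsq]
  module

end MBlock

/-- Lemma 5: if `D` (of order `2m`, `m = 4ℓ+4`) is the adjacency matrix of a
doubly regular `(m,2)`-team tournament coming from a doubly regular tournament
of order `m-1 = 4ℓ+3`, then `M(D)` is the adjacency matrix of a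
DSRG `(4m, 2m-1, m, m-1, m-1)`. -/
theorem stmt8 (l : ℕ)
    (D : Matrix (Fin (2 * (4 * l + 4))) (Fin (2 * (4 * l + 4))) ℤ)
    (h01 : ∀ i j, D i j = 0 ∨ D i j = 1)
    (hdiag : ∀ i, D i i = 0)
    (hDJ : D * allOnes (Fin (2 * (4 * l + 4))) =
      ((4 * (l : ℤ) + 4) - 1) • allOnes (Fin (2 * (4 * l + 4))))
    (hJD : allOnes (Fin (2 * (4 * l + 4))) * D =
      ((4 * (l : ℤ) + 4) - 1) • allOnes (Fin (2 * (4 * l + 4))))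
    (hnormal : D * Dᵀ = Dᵀ * D)
    (hD2 : D * D = (2 * (l : ℤ) + 1) • (D + Dᵀ) +
      (4 * (l : ℤ) + 3) • (allOnes (Fin (2 * (4 * l + 4))) - 1 - D - Dᵀ))
    (hDDT : D * Dᵀ = (4 * (l : ℤ) + 3) • (1 : Matrix (Fin (2 * (4 * l + 4))) (Fin (2 * (4 * l + 4))) ℤ) +
      (2 * (l : ℤ) + 1) • (D + Dᵀ)) :
    IsAdjDSRG (MBlock D)
      (4 * (4 * (l : ℤ) + 4)) (2 * (4 * (l : ℤ) + 4) - 1) (4 * (l : ℤ) + 4)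
      ((4 * (l : ℤ) + 4) - 1) ((4 * (l : ℤ) + 4) - 1) := by
  have hsq : D * D + D * Dᵀ + D + Dᵀ = ((4 * (l : ℤ) + 4) - 1) • allOnes _ := by
    rw [hD2, hDDT]
    module
  convert isAdjDSRG_MBlock h01 hdiag hDJ hJD hnormal hsq using 1
  · simp only [Fintype.card_fin]
    push_cast
    ring
  · ring
  · ring
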